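/- arXiv:2010.04460 — 2 statements merged into one kernel-verified Lean document; each statement's English description precedes it below -/
import Mathlib

section
/- Let $g : [0, 2\pi] \to \mathbb{R}$ be continuous and strictly concave with $g(x) = g(2\pi - x)$ for all $x$. Define $h(\beta_1, \dots, \beta_{m-1}) = \sum_{0 \leq i < j \leq m-1} g(|\beta_j - \beta_i|)$ with $\beta_0 = 0$ and $0 \leq \beta_1 \leq \cdots \leq \beta_{m-1} < 2\pi$. Then $h$ attains its maximum value $\tfrac{1}{2} \sum_{s=1}^{m-1} m \, g(2\pi s/m)$ exactly when $\beta_i = 2\pi i/m$ for all $i$, i.e., at the vertices of the regular $m$-gon. -/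
/-!
Unroll the angles to a nondecreasing sequence `B` with `B (n + m) = B n + 2π`. For `1 ≤ s < m`
the `m` arcs `B (k + s) - B k`, `k < m`, lie in `[0, 2π]` and add up to `2πs`, so by Jensen
their `g`-values add up to at most `m g(2πs/m)`, with equality iff all these arcs equal `2πs/m`.
Because `g(x) = g(2π - x)`, each pair of points contributes twice to the sum over all `(s, k)`
(the arc from `i` to `j` and the arc from `j` to `i`), so `h` is half of it. Equality for `s = 1`
means that all consecutive gaps are `2π/m`.
-/

open Real Finset

section Jensen

variable {ι : Type*} {s : Set ℝ} {f : ℝ → ℝ} {t : Finset ι} {p : ι → ℝ} {a : ℝ}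

lemma ConcaveOn.sum_map_le_card_mul (hf : ConcaveOn ℝ s f) (hmem : ∀ i ∈ t, p i ∈ s)
    (hsum : ∑ i ∈ t, p i = #t * a) : ∑ i ∈ t, f (p i) ≤ #t * f a := by
  rcases t.eq_empty_or_nonempty with rfl | ht
  · simp
  have hn : (0 : ℝ) < #t := by exact_mod_cast ht.card_pos
  have hw : ∑ _i ∈ t, (#t : ℝ)⁻¹ = 1 := by simp [hn.ne']
  have := hf.le_map_sum (fun _ _ => (inv_pos.2 hn).le) hw hmem
  simp only [smul_eq_mul, ← mul_sum, hsum, inv_mul_cancel_left₀ hn.ne'] at this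
  rwa [inv_mul_le_iff₀ hn] at this

lemma StrictConcaveOn.sum_map_eq_card_mul_iff (hf : StrictConcaveOn ℝ s f)
    (hmem : ∀ i ∈ t, p i ∈ s) (hsum : ∑ i ∈ t, p i = #t * a) :
    ∑ i ∈ t, f (p i) = #t * f a ↔ ∀ i ∈ t, p i = a := by
  rcases t.eq_empty_or_nonempty with rfl | ht
  · simp
  have hn : (0 : ℝ) < #t := by exact_mod_cast ht.card_pos
  have hw : ∑ _i ∈ t, (#t : ℝ)⁻¹ = 1 := by simp [hn.ne']
  have := hf.map_sum_eq_iff (fun _ _ => inv_pos.2 hn) hw hmem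
  simp only [smul_eq_mul, ← mul_sum, hsum, inv_mul_cancel_left₀ hn.ne'] at this
  rw [← this, eq_inv_mul_iff_mul_eq₀ hn.ne', eq_comm]

end Jensen

lemma sum_range_sub_of_add_period {G : Type*} [AddCommGroup G] {m : ℕ} {f : ℕ → G} {c : G}
    (hf : ∀ n, f (n + m) = f n + c) (s : ℕ) :
    ∑ k ∈ range m, (f (k + s) - f k) = s • c := by
  induction s with
  | zero => simp
  | succ s ih =>
    have step := sum_range_sub (fun k => f (k + s)) m
    simp only [zero_add, add_right_comm _ 1 s] at step
    rw [add_comm m s, hf, add_sub_cancel_left] at step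
    rw [succ_nsmul, ← ih, ← step, ← sum_add_distrib]
    exact sum_congr rfl fun k _ => by rw [← add_assoc]; abel

/-- Each pair `i < j` is counted once as `(k, k + s) = (i, j)` and once as
`(k + s - m, k) = (i, j)`. -/
lemma sum_Icc_sum_range_ite_eq_two_nsmul {M : Type*} [AddCommMonoid M] (φ : ℕ → ℕ → M)
    (m : ℕ) :
    ∑ s ∈ Icc 1 (m - 1), ∑ k ∈ range m, (if k + s < m then φ k (k + s) else φ (k + s - m) k)
      = 2 • ∑ j ∈ range m, ∑ i ∈ range j, φ i j := by
  simp only [sum_ite, sum_add_distrib, two_nsmul]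
  congr 1 <;> rw [sum_sigma', sum_sigma']
  · refine sum_nbij' (fun p => ⟨p.2 + p.1, p.2⟩) (fun p => ⟨p.1 - p.2, p.2⟩)
      ?_ ?_ ?_ ?_ ?_ <;>
      rintro ⟨s, k⟩ h <;>
      simp only [mem_sigma, mem_Icc, mem_filter, mem_range, Sigma.mk.injEq, heq_eq_eq,
        and_true] at h ⊢ <;>
      omega
  · refine sum_nbij' (fun p => ⟨p.2, p.2 + p.1 - m⟩) (fun p => ⟨m - (p.1 - p.2), p.1⟩)
      ?_ ?_ ?_ ?_ ?_ <;>
      rintro ⟨s, k⟩ h <;>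
      simp only [mem_sigma, mem_Icc, mem_filter, mem_range, Sigma.mk.injEq, heq_eq_eq,
        and_true, true_and] at h ⊢ <;>
      omega

/-- The angles unrolled along `ℕ`: point `n % m` after `n / m` full turns, so that
`angleLift m β (k + s) - angleLift m β k` is the arc from point `k` to the `s`-th point after it. -/
noncomputable def angleLift (m : ℕ) (β : ℕ → ℝ) (n : ℕ) : ℝ :=
  β (n % m) + 2 * π * (n / m : ℕ)

section angleLift

variable {m : ℕ} {β : ℕ → ℝ}

lemma angleLift_of_lt {n : ℕ} (hn : n < m) : angleLift m β n = β n := by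
  simp [angleLift, Nat.mod_eq_of_lt hn, Nat.div_eq_of_lt hn]

lemma angleLift_add_period (hm : 0 < m) (n : ℕ) :
    angleLift m β (n + m) = angleLift m β n + 2 * π := by
  simp only [angleLift, Nat.add_mod_right, Nat.add_div_right _ hm]
  push_cast
  ring

lemma monotone_angleLift (hm : 0 < m) (hmono : ∀ i < m - 1, β i ≤ β (i + 1))
    (hgap : β (m - 1) ≤ β 0 + 2 * π) : Monotone (angleLift m β) := by
  refine monotone_nat_of_le_succ fun n => ?_
  induction n using Nat.strong_induction_on with
  | _ n ih =>
  rcases lt_trichotomy (n + 1) m with h | h | h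
  · rw [angleLift_of_lt h, angleLift_of_lt (by omega)]
    exact hmono n (by omega)
  · obtain rfl : n = m - 1 := by omega
    have hper := angleLift_add_period (β := β) hm 0
    rw [zero_add] at hper
    rw [h, hper, angleLift_of_lt hm, angleLift_of_lt (by omega)]
    exact hgap
  · obtain ⟨k, rfl⟩ : ∃ k, n = k + m := ⟨n - m, by omega⟩
    rw [add_right_comm, angleLift_add_period hm, angleLift_add_period hm]
    linarith [ih k (by omega)]

lemma angleLift_add_sub_mem_Icc (hm : 0 < m) (hmono : ∀ i < m - 1, β i ≤ β (i + 1))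
    (hgap : β (m - 1) ≤ β 0 + 2 * π) (k : ℕ) {s : ℕ} (hs : s ≤ m) :
    angleLift m β (k + s) - angleLift m β k ∈ Set.Icc 0 (2 * π) := by
  have hmon := monotone_angleLift hm hmono hgap
  have h₁ := hmon (show k ≤ k + s by omega)
  have h₂ := hmon (show k + s ≤ k + m by omega)
  rw [angleLift_add_period hm] at h₂
  constructor <;> linarith

lemma sum_angleLift_add_sub (hm : 0 < m) (s : ℕ) :
    ∑ k ∈ range m, (angleLift m β (k + s) - angleLift m β k) =
      #(range m) * (2 * π * s / m) := by
  rw [sum_range_sub_of_add_period (angleLift_add_period hm), card_range, nsmul_eq_mul]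
  field_simp

lemma angleLift_of_regular (hreg : ∀ i < m, β i = 2 * π * i / m) (hm : 0 < m) (n : ℕ) :
    angleLift m β n = 2 * π * n / m := by
  rw [angleLift, hreg _ (Nat.mod_lt n hm)]
  conv_rhs => rw [← Nat.mod_add_div n m]
  push_cast
  field_simp

end angleLift

section Arcs

variable {m : ℕ} {β : ℕ → ℝ} {g : ℝ → ℝ}

lemma map_angleLift_add_sub (hm : 0 < m) (hmono : ∀ i < m - 1, β i ≤ β (i + 1))
    (hgap : β (m - 1) ≤ β 0 + 2 * π) (hsym : ∀ x ∈ Set.Icc 0 (2 * π), g x = g (2 * π - x))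
    {k s : ℕ} (hk : k < m) (hs : s ≤ m) :
    g (angleLift m β (k + s) - angleLift m β k) =
      if k + s < m then g |β (k + s) - β k| else g |β k - β (k + s - m)| := by
  have hmem := angleLift_add_sub_mem_Icc hm hmono hgap k hs
  split_ifs with h
  · rw [angleLift_of_lt h, angleLift_of_lt hk] at hmem ⊢
    rw [abs_of_nonneg hmem.1]
  · have hlift : angleLift m β (k + s) = β (k + s - m) + 2 * π := by
      rw [← angleLift_of_lt (m := m) (β := β) (by omega : k + s - m < m),
        ← angleLift_add_period hm, Nat.sub_add_cancel (not_lt.1 h)]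
    rw [hlift, angleLift_of_lt hk] at hmem ⊢
    rw [hsym _ hmem, abs_of_nonneg (by linarith [hmem.2])]
    ring_nf

lemma sum_sum_map_angleLift_add_sub (hmono : ∀ i < m - 1, β i ≤ β (i + 1))
    (hgap : β (m - 1) ≤ β 0 + 2 * π) (hsym : ∀ x ∈ Set.Icc 0 (2 * π), g x = g (2 * π - x)) :
    ∑ s ∈ Icc 1 (m - 1), ∑ k ∈ range m, g (angleLift m β (k + s) - angleLift m β k) =
      2 * ∑ j ∈ range m, ∑ i ∈ range j, g |β j - β i| := by
  calc _ = ∑ s ∈ Icc 1 (m - 1), ∑ k ∈ range m,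
          (if k + s < m then g |β (k + s) - β k| else g |β k - β (k + s - m)|) := by
        refine sum_congr rfl fun s hs => sum_congr rfl fun k hk => ?_
        rw [mem_Icc] at hs
        rw [mem_range] at hk
        exact map_angleLift_add_sub (by omega) hmono hgap hsym hk (by omega)
    _ = 2 • ∑ j ∈ range m, ∑ i ∈ range j, g |β j - β i| :=
        sum_Icc_sum_range_ite_eq_two_nsmul (fun i j => g |β j - β i|) m
    _ = _ := by rw [two_nsmul, two_mul]

lemma sum_map_angleLift_add_sub_le (hm : 0 < m) (hmono : ∀ i < m - 1, β i ≤ β (i + 1))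
    (hgap : β (m - 1) ≤ β 0 + 2 * π) (hg : ConcaveOn ℝ (Set.Icc 0 (2 * π)) g) {s : ℕ}
    (hs : s ≤ m) :
    ∑ k ∈ range m, g (angleLift m β (k + s) - angleLift m β k) ≤ m * g (2 * π * s / m) := by
  simpa using hg.sum_map_le_card_mul
    (fun k _ => angleLift_add_sub_mem_Icc hm hmono hgap k hs) (sum_angleLift_add_sub hm s)

lemma sum_map_angleLift_add_sub_eq_iff (hm : 0 < m) (hmono : ∀ i < m - 1, β i ≤ β (i + 1))
    (hgap : β (m - 1) ≤ β 0 + 2 * π) (hg : StrictConcaveOn ℝ (Set.Icc 0 (2 * π)) g) {s : ℕ}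
    (hs : s ≤ m) :
    ∑ k ∈ range m, g (angleLift m β (k + s) - angleLift m β k) = m * g (2 * π * s / m) ↔
      ∀ k < m, angleLift m β (k + s) - angleLift m β k = 2 * π * s / m := by
  simpa using hg.sum_map_eq_card_mul_iff
    (fun k _ => angleLift_add_sub_mem_Icc hm hmono hgap k hs) (sum_angleLift_add_sub hm s)

lemma forall_angleLift_add_sub_eq_iff (hβ0 : β 0 = 0) :
    (∀ s ∈ Icc 1 (m - 1), ∀ k < m,
        angleLift m β (k + s) - angleLift m β k = 2 * π * s / m) ↔
      ∀ i < m, β i = 2 * π * i / m := by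
  constructor
  · intro h i
    induction i with
    | zero => simp [hβ0]
    | succ i ih =>
      intro hi
      have hstep := h 1 (by rw [mem_Icc]; omega) i (by omega)
      rw [angleLift_of_lt hi, angleLift_of_lt (by omega), ih (by omega)] at hstep
      calc β (i + 1) = 2 * π * i / m + 2 * π * (1 : ℕ) / m := by linarith
        _ = _ := by push_cast; ring
  · intro hreg s hs k hk
    rw [angleLift_of_regular hreg (by omega), angleLift_of_regular hreg (by omega)]
    push_cast
    ring

end Arcs

theorem pairwise_sum_max_regular_polygon_general (m : ℕ) (g : ℝ → ℝ)
    (hg : StrictConcaveOn ℝ (Set.Icc 0 (2 * π)) g)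
    (hsym : ∀ x ∈ Set.Icc 0 (2 * π), g x = g (2 * π - x))
    (β : ℕ → ℝ) (hβ0 : β 0 = 0)
    (hmono : ∀ i < m - 1, β i ≤ β (i + 1)) (hlt : β (m - 1) < 2 * π) :
    (∑ j ∈ Finset.range m, ∑ i ∈ Finset.range j, g (|β j - β i|)) ≤
        (1 / 2) * ∑ s ∈ Finset.Icc 1 (m - 1), m * g (2 * π * s / m) ∧
      ((∑ j ∈ Finset.range m, ∑ i ∈ Finset.range j, g (|β j - β i|)) =
          (1 / 2) * ∑ s ∈ Finset.Icc 1 (m - 1), m * g (2 * π * s / m) ↔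
        ∀ i < m, β i = 2 * π * i / m) := by
  have hgap : β (m - 1) ≤ β 0 + 2 * π := by linarith
  have hm₀ : ∀ s ∈ Icc 1 (m - 1), 0 < m ∧ s ≤ m := fun s hs => by rw [mem_Icc] at hs; omega
  have hle : ∀ s ∈ Icc 1 (m - 1),
      ∑ k ∈ range m, g (angleLift m β (k + s) - angleLift m β k) ≤ m * g (2 * π * s / m) :=
    fun s hs =>
      sum_map_angleLift_add_sub_le (hm₀ s hs).1 hmono hgap hg.concaveOn (hm₀ s hs).2
  rw [one_div,
    (eq_inv_mul_iff_mul_eq₀ two_ne_zero).2 (sum_sum_map_angleLift_add_sub hmono hgap hsym).symm]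
  refine ⟨mul_le_mul_of_nonneg_left (sum_le_sum hle) (by norm_num), ?_⟩
  rw [mul_right_inj' (by norm_num), sum_eq_sum_iff_of_le hle,
    ← forall_angleLift_add_sub_eq_iff hβ0]
  exact forall₂_congr fun s hs =>
    sum_map_angleLift_add_sub_eq_iff (hm₀ s hs).1 hmono hgap hg (hm₀ s hs).2

theorem pairwise_sum_max_regular_polygon (m : ℕ) (hm : 2 ≤ m)
    (g : ℝ → ℝ) (hgc : ContinuousOn g (Set.Icc 0 (2 * π)))
    (hg : StrictConcaveOn ℝ (Set.Icc 0 (2 * π)) g)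
    (hsym : ∀ x ∈ Set.Icc 0 (2 * π), g x = g (2 * π - x))
    (β : ℕ → ℝ) (hβ0 : β 0 = 0)
    (hmono : ∀ i < m - 1, β i ≤ β (i + 1)) (hlt : β (m - 1) < 2 * π) :
    (∑ j ∈ Finset.range m, ∑ i ∈ Finset.range j, g (|β j - β i|)) ≤
        (1 / 2) * ∑ s ∈ Finset.Icc 1 (m - 1), m * g (2 * π * s / m) ∧
      ((∑ j ∈ Finset.range m, ∑ i ∈ Finset.range j, g (|β j - β i|)) =
          (1 / 2) * ∑ s ∈ Finset.Icc 1 (m - 1), m * g (2 * π * s / m) ↔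
        ∀ i < m, β i = 2 * π * i / m) :=
  pairwise_sum_max_regular_polygon_general m g hg hsym β hβ0 hmono hlt
end

section
/- The minimum of $\sum_{0 \le i < j \le 2} \frac{1}{|U_i U_j|}$ over triples of points $U_0, U_1, U_2$ on the unit circle, where $|U_iU_j| = 2\sin(|\beta_j - \beta_i|/2)$ for angular coordinates $\beta_i$, equals $\sqrt{3}$, attained exactly when the three points form an equilateral triangle. -/
/-!
With half-angles `x = β₁/2`, `y = π - β₂/2`, `z = (β₂ - β₁)/2` of the inscribed triangle, the
chords are `2 sin x`, `2 sin y`, `2 sin z` with `x + y + z = π`. Since `t ↦ 1 / sin t` is strictly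
convex on `(0, π)` (the inverse, convex and decreasing, composed with the strictly concave `sin`),
Jensen's inequality gives `∑ 1 / sin ≥ 3 / sin (π / 3) = 2√3`, with equality only for
`x = y = z = π / 3`.
-/

open Real Set

section ThreePoints

variable {s : Set ℝ} {f : ℝ → ℝ} {a b c : ℝ}

private lemma sum_third_fin_three (v : Fin 3 → ℝ) :
    ∑ i, (1 / 3 : ℝ) • v i = (v 0 + v 1 + v 2) / 3 := by
  rw [Fin.sum_univ_three]
  simp only [smul_eq_mul]
  ring

theorem ConvexOn.three_mul_map_div_three_le (hf : ConvexOn ℝ s f)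
    (ha : a ∈ s) (hb : b ∈ s) (hc : c ∈ s) :
    3 * f ((a + b + c) / 3) ≤ f a + f b + f c := by
  have hjensen := hf.map_sum_le (t := Finset.univ) (w := fun _ ↦ 1 / 3) (p := ![a, b, c])
    (by simp) (by simp) (by intro i; fin_cases i <;> simpa)
  rw [sum_third_fin_three, sum_third_fin_three (fun i ↦ f (![a, b, c] i))] at hjensen
  simp only [Matrix.cons_val_zero, Matrix.cons_val_one, Matrix.cons_val_two,
    Matrix.tail_cons, Matrix.head_cons] at hjensen
  linarith

theorem StrictConvexOn.eq_of_add_add_le_three_mul_map (hf : StrictConvexOn ℝ s f)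
    (ha : a ∈ s) (hb : b ∈ s) (hc : c ∈ s) (h : f a + f b + f c ≤ 3 * f ((a + b + c) / 3)) :
    a = b ∧ b = c := by
  have hle : ∑ i, (1 / 3 : ℝ) • f (![a, b, c] i) ≤ f (∑ i, (1 / 3 : ℝ) • ![a, b, c] i) := by
    rw [sum_third_fin_three ![a, b, c], sum_third_fin_three (fun i ↦ f (![a, b, c] i))]
    simp only [Matrix.cons_val_zero, Matrix.cons_val_one, Matrix.cons_val_two,
      Matrix.tail_cons, Matrix.head_cons]
    linarith
  have heq := hf.eq_of_le_map_sum (t := Finset.univ) (by simp) (by simp)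
    (by intro i; fin_cases i <;> simpa) hle
  exact ⟨heq (Finset.mem_univ 0) (Finset.mem_univ 1), heq (Finset.mem_univ 1) (Finset.mem_univ 2)⟩

end ThreePoints

theorem strictConvexOn_inv_sin : StrictConvexOn ℝ (Ioo 0 π) fun x ↦ (sin x)⁻¹ := by
  have hinv : ConvexOn ℝ (Ioi 0) fun t : ℝ ↦ t⁻¹ := by
    simpa only [zpow_neg_one] using convexOn_zpow (𝕜 := ℝ) (-1)
  have himage : sin '' Ioo 0 π ⊆ Ioi 0 := by
    rintro _ ⟨x, hx, rfl⟩
    exact sin_pos_of_pos_of_lt_pi hx.1 hx.2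
  have hconv : Convex ℝ (sin '' Ioo 0 π) :=
    (isPreconnected_Ioo.image sin continuous_sin.continuousOn).convex
  exact (hinv.subset himage hconv).comp_strictConcaveOn
    (strictConcaveOn_sin_Icc.subset Ioo_subset_Icc_self (convex_Ioo 0 π))
    (strictAntiOn_inv_pos.mono himage)

theorem three_mul_inv_sin_pi_div_three : 3 * (sin (π / 3))⁻¹ = 2 * √3 := by
  have h3 : √3 * √3 = 3 := mul_self_sqrt (by norm_num)
  rw [sin_pi_div_three]
  field_simp
  linarith

section TriangleAngles

variable {x y z : ℝ}

theorem two_mul_sqrt_three_le_sum_inv_sin (hx : x ∈ Ioo 0 π) (hy : y ∈ Ioo 0 π)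
    (hz : z ∈ Ioo 0 π) (hsum : x + y + z = π) :
    2 * √3 ≤ (sin x)⁻¹ + (sin y)⁻¹ + (sin z)⁻¹ := by
  have hjensen := strictConvexOn_inv_sin.convexOn.three_mul_map_div_three_le hx hy hz
  rwa [hsum, three_mul_inv_sin_pi_div_three] at hjensen

theorem sum_inv_sin_eq_two_mul_sqrt_three_iff (hx : x ∈ Ioo 0 π) (hy : y ∈ Ioo 0 π)
    (hz : z ∈ Ioo 0 π) (hsum : x + y + z = π) :
    (sin x)⁻¹ + (sin y)⁻¹ + (sin z)⁻¹ = 2 * √3 ↔ x = π / 3 ∧ y = π / 3 := by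
  refine ⟨fun heq ↦ ?_, fun ⟨hx3, hy3⟩ ↦ ?_⟩
  · have hequal := strictConvexOn_inv_sin.eq_of_add_add_le_three_mul_map hx hy hz
      (by rw [hsum, three_mul_inv_sin_pi_div_three, heq])
    constructor <;> linarith [hequal.1, hequal.2]
  · have hz3 : z = π / 3 := by linarith
    rw [hx3, hy3, hz3, ← three_mul_inv_sin_pi_div_three]
    ring

end TriangleAngles

theorem min_sum_inverse_chords_triangle (β₁ β₂ : ℝ)
    (h01 : 0 < β₁) (h12 : β₁ < β₂) (h2 : β₂ < 2 * π) :
    Real.sqrt 3 ≤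
        1 / (2 * sin (β₁ / 2)) + 1 / (2 * sin (β₂ / 2)) +
          1 / (2 * sin ((β₂ - β₁) / 2)) ∧
      (1 / (2 * sin (β₁ / 2)) + 1 / (2 * sin (β₂ / 2)) +
            1 / (2 * sin ((β₂ - β₁) / 2)) = Real.sqrt 3 ↔
        β₁ = 2 * π / 3 ∧ β₂ = 4 * π / 3) := by
  have hx : β₁ / 2 ∈ Ioo 0 π := ⟨by linarith, by linarith⟩
  have hy : π - β₂ / 2 ∈ Ioo 0 π := ⟨by linarith, by linarith⟩
  have hz : (β₂ - β₁) / 2 ∈ Ioo 0 π := ⟨by linarith, by linarith⟩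
  have hsum : β₁ / 2 + (π - β₂ / 2) + (β₂ - β₁) / 2 = π := by ring
  have hhalf : 1 / (2 * sin (β₁ / 2)) + 1 / (2 * sin (β₂ / 2)) + 1 / (2 * sin ((β₂ - β₁) / 2)) =
      ((sin (β₁ / 2))⁻¹ + (sin (π - β₂ / 2))⁻¹ + (sin ((β₂ - β₁) / 2))⁻¹) / 2 := by
    rw [sin_pi_sub]
    ring
  rw [hhalf]
  constructor
  · linarith [two_mul_sqrt_three_le_sum_inv_sin hx hy hz hsum]
  · rw [div_eq_iff two_ne_zero, mul_comm, sum_inv_sin_eq_two_mul_sqrt_three_iff hx hy hz hsum]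
    constructor <;> rintro ⟨h₁, h₂⟩ <;> constructor <;> linarith
end
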